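/- If a term A satisfies A ⪯ U for a universe U, then there is a universe U' ⪯ U with A ≃ U'. -/

import Mathlib

namespace ECC

/-- Terms of Luo's Extended Calculus of Constructions, in de Bruijn representation. -/
inductive Term : Type
  | var   : ℕ → Term
  | prop  : Term
  | type  : ℕ → Term
  | pi    : Term → Term → Term
  | sigma : Term → Term → Term
  | lam   : Term → Term → Term
  | app   : Term → Term → Term
  | pair  : Term → Term → Term → Term   -- ⟨M, N⟩_B with type annotation B
  | proj1 : Term → Term
  | proj2 : Term → Term
deriving DecidableEq

/-- Lift (shift by `d`) all de Bruijn indices ≥ `k`. -/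
def lift (d : ℕ) : ℕ → Term → Term
  | k, .var n       => if n < k then .var n else .var (n + d)
  | _, .prop        => .prop
  | _, .type j      => .type j
  | k, .pi A B      => .pi (lift d k A) (lift d (k+1) B)
  | k, .sigma A B   => .sigma (lift d k A) (lift d (k+1) B)
  | k, .lam A M     => .lam (lift d k A) (lift d (k+1) M)
  | k, .app M N     => .app (lift d k M) (lift d k N)
  | k, .pair M N B  => .pair (lift d k M) (lift d k N) (lift d k B)
  | k, .proj1 M     => .proj1 (lift d k M)
  | k, .proj2 M     => .proj2 (lift d k M)

/-- Capture-avoiding substitution `[N/x]A` of the term `N` for the variable `x` in `A`. -/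
def subst (N : Term) : ℕ → Term → Term
  | k, .var n       => if n < k then .var n else if n = k then lift k 0 N else .var (n - 1)
  | _, .prop        => .prop
  | _, .type j      => .type j
  | k, .pi A B      => .pi (subst N k A) (subst N (k+1) B)
  | k, .sigma A B   => .sigma (subst N k A) (subst N (k+1) B)
  | k, .lam A M     => .lam (subst N k A) (subst N (k+1) M)
  | k, .app M M'    => .app (subst N k M) (subst N k M')
  | k, .pair M M' B => .pair (subst N k M) (subst N k M') (subst N k B)
  | k, .proj1 M     => .proj1 (subst N k M)
  | k, .proj2 M     => .proj2 (subst N k M)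

/-- `[N/x₀]B` : substitution for the outermost bound variable. -/
def subst0 (B N : Term) : Term := subst N 0 B

/-- One-step reduction (β together with the projection reductions, closed under all
term-formation congruences). -/
inductive Red : Term → Term → Prop
  | beta    : Red (.app (.lam A M) N) (subst0 M N)
  | pr1     : Red (.proj1 (.pair M N B)) M
  | pr2     : Red (.proj2 (.pair M N B)) N
  | piL     : Red A A' → Red (.pi A B) (.pi A' B)
  | piR     : Red B B' → Red (.pi A B) (.pi A B')
  | sigmaL  : Red A A' → Red (.sigma A B) (.sigma A' B)
  | sigmaR  : Red B B' → Red (.sigma A B) (.sigma A B')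
  | lamL    : Red A A' → Red (.lam A M) (.lam A' M)
  | lamR    : Red M M' → Red (.lam A M) (.lam A M')
  | appL    : Red M M' → Red (.app M N) (.app M' N)
  | appR    : Red N N' → Red (.app M N) (.app M N')
  | pairL   : Red M M' → Red (.pair M N B) (.pair M' N B)
  | pairR   : Red N N' → Red (.pair M N B) (.pair M N' B)
  | pairB   : Red B B' → Red (.pair M N B) (.pair M N B')
  | proj1C  : Red M M' → Red (.proj1 M) (.proj1 M')
  | proj2C  : Red M M' → Red (.proj2 M) (.proj2 M')

/-- Conversion `≃` : the equivalence relation generated by reduction. -/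
def Conv : Term → Term → Prop := Relation.EqvGen Red

/-- `A` has a normal form. -/
def HasNF (A : Term) : Prop :=
  ∃ B, Relation.ReflTransGen Red A B ∧ ∀ C, ¬ Red B C

/-- `𝒯` : the set of normalisable terms. -/
def Tset : Set Term := {A | HasNF A}

/-- Universes are `Prop` and the `Type_j`. -/
def IsUniv (T : Term) : Prop := T = .prop ∨ ∃ j, T = .type j

/-- The cumulativity relation `⪯` : the smallest preorder containing conversion,
the universe order, congruence for Π in the codomain, and congruence for Σ in both
components. -/
inductive Cum : Term → Term → Prop
  | conv     : Conv A B → Cum A B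
  | propType : Cum .prop (.type 0)
  | typeType : j ≤ k → Cum (.type j) (.type k)
  | pi       : Conv A A' → Cum B B' → Cum (.pi A B) (.pi A' B')
  | sigma    : Cum A A' → Cum B B' → Cum (.sigma A B) (.sigma A' B')
  | trans    : Cum A B → Cum B C → Cum A C

/-- The strict cumulativity relation `≺` : `A ⪯ B` and `A ≄ B`. -/
def SCum (A B : Term) : Prop := Cum A B ∧ ¬ Conv A B

/-- The stratified cumulativity relations `⪯ᵢ`. -/
inductive CumL : ℕ → Term → Term → Prop
  | conv     : Conv A B → CumL i A B
  | propType : CumL i .prop (.type j)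
  | typeType : j < k → CumL i (.type j) (.type k)
  | succ     : CumL i A B → CumL (i+1) A B
  | pi       : Conv M (.pi A B) → Conv N (.pi A' B') → Conv A A' → CumL i B B' →
               CumL (i+1) M N
  | sigma    : Conv M (.sigma A B) → Conv N (.sigma A' B') → CumL i A A' → CumL i B B' →
               CumL (i+1) M N

/-- Strict stratified cumulativity `≺ᵢ`. -/
def SCumL (i : ℕ) (A B : Term) : Prop := CumL i A B ∧ ¬ Conv A B

/-- Is the outermost symbol of a term Π or Σ? -/
def BinderHeaded : Term → Prop
  | .pi _ _    => True
  | .sigma _ _ => True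
  | _          => False

/-- The base stratum: normalisable terms not convertible to a binder-headed
normalisable term. -/
def Base : Set Term :=
  {T | HasNF T ∧ ¬ ∃ B, HasNF B ∧ BinderHeaded B ∧ Conv T B}

/-- The stratification `(Π_n, Σ_n)` of `𝒯`. -/
def Strata : ℕ → Set Term × Set Term
  | 0 => (Base, Base)
  | n+1 =>
    ({T | ∃ k l, ∃ _ : k + l = n, ∃ A B, HasNF (Term.pi A B) ∧ Conv T (Term.pi A B) ∧
        A ∈ (Strata k).1 ∪ (Strata k).2 ∧ B ∈ (Strata l).1 ∪ (Strata l).2},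
     {T | ∃ k l, ∃ _ : k + l = n, ∃ A B, HasNF (Term.sigma A B) ∧ Conv T (Term.sigma A B) ∧
        A ∈ (Strata k).1 ∪ (Strata k).2 ∧ B ∈ (Strata l).1 ∪ (Strata l).2})
termination_by n => n
decreasing_by all_goals omega

/-- The stratum `Π_n`. -/
def PiStr (n : ℕ) : Set Term := (Strata n).1

/-- The stratum `Σ_n`. -/
def SigStr (n : ℕ) : Set Term := (Strata n).2

/-- The specification of the rank function `φ : 𝒯 → ω`. -/
def PhiSpec (φ : Term → ℕ) : Prop :=
  (∀ M N, HasNF M → HasNF N → Conv M N → φ M = φ N) ∧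
  (∀ T, HasNF T → Conv T .prop → φ T = 2) ∧
  (∀ T j, HasNF T → Conv T (.type j) → φ T = 3 + j) ∧
  (∀ T, T ∈ PiStr 0 → ¬ Conv T .prop → (∀ j, ¬ Conv T (.type j)) → φ T = 1) ∧
  (∀ T A B, HasNF T → (Conv T (.pi A B) ∨ Conv T (.sigma A B)) → φ T = φ A * φ B) ∧
  (∀ T, HasNF T → 0 < φ T)

mutual
/-- Valid contexts of ECC (de Bruijn: the head of the list is the most recent entry). -/
inductive Valid : List Term → Prop
  | nil  : Valid []
  | cons : Typing Γ A (.type j) → Valid (A :: Γ)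

/-- The typing judgement `Γ ⊢ M : A` of ECC. -/
inductive Typing : List Term → Term → Term → Prop
  | prop  : Valid Γ → Typing Γ .prop (.type 0)
  | type  : Valid Γ → Typing Γ (.type j) (.type (j+1))
  | var   : Valid Γ → Γ[(n : ℕ)]? = some A → Typing Γ (.var n) (lift (n+1) 0 A)
  | pi1   : Typing Γ A (.type j) → Typing (A :: Γ) B .prop →
            Typing Γ (.pi A B) .prop
  | pi2   : Typing Γ A (.type j) → Typing (A :: Γ) B (.type j) →
            Typing Γ (.pi A B) (.type j)
  | sig   : Typing Γ A (.type j) → Typing (A :: Γ) B (.type j) →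
            Typing Γ (.sigma A B) (.type j)
  | lam   : Typing (A :: Γ) M B → Typing Γ (.lam A M) (.pi A B)
  | app   : Typing Γ M (.pi A B) → Typing Γ N A → Typing Γ (.app M N) (subst0 B N)
  | pair  : Typing Γ M A → Typing Γ N (subst0 B M) → Typing (A :: Γ) B (.type j) →
            Typing Γ (.pair M N (.sigma A B)) (.sigma A B)
  | proj1 : Typing Γ M (.sigma A B) → Typing Γ (.proj1 M) A
  | proj2 : Typing Γ M (.sigma A B) → Typing Γ (.proj2 M) (subst0 B (.proj1 M))
  | cum   : Typing Γ M A → Typing Γ B (.type j) → Cum A B → Typing Γ M B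
end

/-- `Type_j` for `j ∈ ℤ`, with the convention `Type_{-1} = Prop`. -/
def TType (j : ℤ) : Term := if j < 0 then .prop else .type j.toNat

/-- The typing judgement of the restricted system `ECC⁻`: the rules
`(Π2)(Σ)(app)(pair)(⪯)` of ECC are replaced by `(Π2')(Σ')(app')(pair')` and `(≃)_ρ`. -/
inductive TypingM : List Term → Term → Term → Prop
  | prop  : Valid Γ → TypingM Γ .prop (.type 0)
  | type  : Valid Γ → TypingM Γ (.type j) (.type (j+1))
  | var   : Valid Γ → Γ[(n : ℕ)]? = some A → TypingM Γ (.var n) (lift (n+1) 0 A)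
  | pi1   : TypingM Γ A (.type j) → TypingM (A :: Γ) B .prop →
            TypingM Γ (.pi A B) .prop
  | pi2'  : TypingM Γ A (TType j) → TypingM (A :: Γ) B (TType k) → 0 ≤ k →
            TypingM Γ (.pi A B) (TType (max (max j k) 0))
  | sig'  : TypingM Γ A (TType j) → TypingM (A :: Γ) B (TType k) →
            TypingM Γ (.sigma A B) (TType (max (max j k) 0))
  | lam   : TypingM (A :: Γ) M B → TypingM Γ (.lam A M) (.pi A B)
  | app'  : TypingM Γ M (.pi A B) → TypingM Γ N A' → Cum A' A →
            TypingM Γ (.app M N) (subst0 B N)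
  | pair' : TypingM Γ M A → TypingM Γ N C → TypingM (A' :: Γ) B' (.type j) →
            Cum A A' → Cum C (subst0 B' M) →
            TypingM Γ (.pair M N (.sigma A' B')) (.sigma A' B')
  | proj1 : TypingM Γ M (.sigma A B) → TypingM Γ (.proj1 M) A
  | proj2 : TypingM Γ M (.sigma A B) → TypingM Γ (.proj2 M) (subst0 B (.proj1 M))
  | conv  : TypingM Γ M A → Conv A A' → Typing Γ A' (.type j) → TypingM Γ M A'

end ECC

/-!
By the Church–Rosser theorem, proved with Tait–Martin-Löf parallel reduction and Takahashi's
complete development (every parallel reduct of `t` parallel-reduces to `develop t`), convertible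
terms have a common reduct. A universe reduces only to itself and a Π- or Σ-term only to Π- or
Σ-terms, so no binder-headed term is convertible to a universe. Hence in a derivation of `A ⪯ B`
with `B` convertible to a universe the Π- and Σ-congruence rules cannot come last, and induction
on the derivation, strengthened to `B ≃ U`, yields the universe `U'`.
-/

namespace ECC

theorem lift_lift_comm (d d' : ℕ) (t : Term) {k k' : ℕ} (h : k ≤ k') :
    lift d k (lift d' k' t) = lift d' (k' + d) (lift d k t) := by
  induction t generalizing k k' <;> grind [lift]

theorem lift_lift_add (d d' : ℕ) (t : Term) {k k' : ℕ} (h₁ : k ≤ k') (h₂ : k' ≤ k + d) :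
    lift d' k' (lift d k t) = lift (d + d') k t := by
  induction t generalizing k k' <;> grind [lift]

theorem subst_lift_of_le (N : Term) (d : ℕ) (t : Term) {j k : ℕ} (h : j ≤ k) :
    subst N (k + d) (lift d j t) = lift d j (subst N k t) := by
  induction t generalizing j k <;> grind [lift, subst, lift_lift_add]

theorem subst_lift_cancel (M : Term) (d : ℕ) (t : Term) {j i : ℕ} (h₁ : j ≤ i) (h₂ : i < j + d) :
    subst M i (lift d j t) = lift (d - 1) j t := by
  induction t generalizing j i <;> grind [lift, subst]

theorem lift_subst (N : Term) (d : ℕ) (t : Term) {i k : ℕ} (h : i ≤ k) :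
    lift d k (subst N i t) = subst (lift d (k - i) N) i (lift d (k + 1) t) := by
  induction t generalizing i k <;> grind [lift, subst, lift_lift_comm]

theorem subst_subst (N P : Term) (t : Term) {i k : ℕ} (h : i ≤ k) :
    subst N k (subst P i t) = subst (subst N (k - i) P) i (subst N (k + 1) t) := by
  induction t generalizing i k with
  | var n =>
    have hP : subst N k (lift i 0 P) = lift i 0 (subst N (k - i) P) := by
      simpa only [Nat.sub_add_cancel h] using subst_lift_of_le N i P (Nat.zero_le (k - i))
    grind [lift, subst, subst_lift_cancel]
  | _ => grind [subst]

def develop : Term → Term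
  | .app (.lam _ M) N => subst0 (develop M) (develop N)
  | .proj1 (.pair M _ _) => develop M
  | .proj2 (.pair _ N _) => develop N
  | .var n => .var n
  | .prop => .prop
  | .type j => .type j
  | .pi A B => .pi (develop A) (develop B)
  | .sigma A B => .sigma (develop A) (develop B)
  | .lam A M => .lam (develop A) (develop M)
  | .app M N => .app (develop M) (develop N)
  | .pair M N B => .pair (develop M) (develop N) (develop B)
  | .proj1 M => .proj1 (develop M)
  | .proj2 M => .proj2 (develop M)

inductive PRed : Term → Term → Prop
  | var   : PRed (.var n) (.var n)
  | prop  : PRed .prop .prop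
  | type  : PRed (.type j) (.type j)
  | pi    : PRed A A' → PRed B B' → PRed (.pi A B) (.pi A' B')
  | sigma : PRed A A' → PRed B B' → PRed (.sigma A B) (.sigma A' B')
  | lam   : PRed A A' → PRed M M' → PRed (.lam A M) (.lam A' M')
  | app   : PRed M M' → PRed N N' → PRed (.app M N) (.app M' N')
  | pair  : PRed M M' → PRed N N' → PRed B B' → PRed (.pair M N B) (.pair M' N' B')
  | proj1 : PRed M M' → PRed (.proj1 M) (.proj1 M')
  | proj2 : PRed M M' → PRed (.proj2 M) (.proj2 M')
  | beta  : PRed M M' → PRed N N' → PRed (.app (.lam A M) N) (subst0 M' N')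
  | pr1   : PRed M M' → PRed (.proj1 (.pair M N B)) M'
  | pr2   : PRed N N' → PRed (.proj2 (.pair M N B)) N'

namespace PRed

theorem refl (t : Term) : PRed t t := by
  induction t <;> constructor <;> assumption

theorem lift {M M' : Term} (h : PRed M M') (d k : ℕ) : PRed (lift d k M) (lift d k M') := by
  induction h generalizing k with
  | var => simp only [ECC.lift]; split_ifs <;> exact .var
  | @beta M M' N N' A _ _ ihM ihN =>
    rw [ECC.lift, subst0, lift_subst N' d M' (Nat.zero_le k), Nat.sub_zero]
    exact .beta (ihM (k + 1)) (ihN k)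
  | _ => constructor <;> apply_assumption

theorem subst {N N' M M' : Term} (hN : PRed N N') (h : PRed M M') (k : ℕ) :
    PRed (subst N k M) (subst N' k M') := by
  induction h generalizing k with
  | var => simp only [ECC.subst]; split_ifs <;> first | exact .var | exact hN.lift k 0
  | @beta M M' P P' A _ _ ihM ihP =>
    rw [ECC.subst, subst0, subst_subst N' P' M' (Nat.zero_le k), Nat.sub_zero]
    exact .beta (ihM (k + 1)) (ihP k)
  | _ => constructor <;> apply_assumption

theorem develop {t s : Term} (h : PRed t s) : PRed s (develop t) := by
  induction h with
  | app hM _ ihM ihN =>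
    cases hM with
    | lam _ _ => cases ihM with
      | lam _ ihP => exact .beta ihP ihN
    | _ => exact .app ihM ihN
  | proj1 hM ihM =>
    cases hM with
    | pair _ _ _ => cases ihM with
      | pair ihP _ _ => exact .pr1 ihP
    | _ => exact .proj1 ihM
  | proj2 hM ihM =>
    cases hM with
    | pair _ _ _ => cases ihM with
      | pair _ ihQ _ => exact .pr2 ihQ
    | _ => exact .proj2 ihM
  | beta _ _ ihM ihN => exact ihN.subst ihM 0
  | pr1 _ ih => exact ih
  | pr2 _ ih => exact ih
  | _ => constructor <;> assumption

theorem diamond {a b c : Term} (hb : PRed a b) (hc : PRed a c) :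
    ∃ d, PRed b d ∧ PRed c d :=
  ⟨ECC.develop a, hb.develop, hc.develop⟩

end PRed

open Relation

theorem Red.toPRed {a b : Term} (h : Red a b) : PRed a b := by
  induction h with
  | beta => exact .beta (.refl _) (.refl _)
  | pr1 => exact .pr1 (.refl _)
  | pr2 => exact .pr2 (.refl _)
  | _ => constructor <;> first | assumption | exact .refl _

theorem equivalence_join_reflTransGen_pRed : Equivalence (Join (ReflTransGen PRed)) :=
  equivalence_join_reflTransGen fun _ _ _ hb hc =>
    let ⟨d, hbd, hcd⟩ := PRed.diamond hb hc
    ⟨d, .single hbd, .single hcd⟩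

theorem Conv.join_reflTransGen_pRed {a b : Term} (h : Conv a b) : Join (ReflTransGen PRed) a b :=
  equivalence_join_reflTransGen_pRed.eqvGen_iff.mp <|
    EqvGen.mono (fun _ _ hr => ⟨_, .single hr.toPRed, .refl⟩) _ _ h

theorem PRed.binderHeaded {a b : Term} (h : PRed a b) (ha : BinderHeaded a) : BinderHeaded b := by
  cases h <;> first | exact ha | trivial

theorem binderHeaded_of_reflTransGen_pRed {a b : Term} (h : ReflTransGen PRed a b)
    (ha : BinderHeaded a) : BinderHeaded b := by
  induction h with
  | refl => exact ha
  | tail _ hbc ih => exact hbc.binderHeaded ih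

theorem PRed.eq_of_isUniv {U V : Term} (h : PRed U V) (hU : IsUniv U) : V = U := by
  rcases hU with rfl | ⟨j, rfl⟩ <;> cases h <;> rfl

theorem eq_of_reflTransGen_pRed_of_isUniv {U V : Term} (h : ReflTransGen PRed U V)
    (hU : IsUniv U) : V = U := by
  induction h with
  | refl => rfl
  | tail _ hbc ih => subst ih; exact hbc.eq_of_isUniv hU

theorem IsUniv.not_binderHeaded {U : Term} (hU : IsUniv U) : ¬ BinderHeaded U := by
  rcases hU with rfl | ⟨j, rfl⟩ <;> exact id

theorem not_conv_of_binderHeaded_of_isUniv {B U : Term} (hB : BinderHeaded B) (hU : IsUniv U) :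
    ¬ Conv B U := fun h => by
  obtain ⟨c, hBc, hUc⟩ := h.join_reflTransGen_pRed
  rw [eq_of_reflTransGen_pRed_of_isUniv hUc hU] at hBc
  exact hU.not_binderHeaded (binderHeaded_of_reflTransGen_pRed hBc hB)

theorem Cum.exists_isUniv_of_conv_isUniv {A B U : Term} (h : Cum A B) (hBU : Conv B U)
    (hU : IsUniv U) : ∃ U', IsUniv U' ∧ Cum U' U ∧ Conv A U' := by
  induction h generalizing U with
  | conv hAB => exact ⟨U, hU, .conv (.refl U), .trans _ _ _ hAB hBU⟩
  | propType => exact ⟨.prop, .inl rfl, .trans .propType (.conv hBU), .refl _⟩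
  | @typeType j _ hjk =>
    exact ⟨.type j, .inr ⟨j, rfl⟩, .trans (.typeType hjk) (.conv hBU), .refl _⟩
  | pi _ _ _ => exact absurd hBU (not_conv_of_binderHeaded_of_isUniv trivial hU)
  | sigma _ _ _ _ => exact absurd hBU (not_conv_of_binderHeaded_of_isUniv trivial hU)
  | trans _ _ ihAB ihBC =>
    obtain ⟨V, hV, hVU, hBV⟩ := ihBC hBU hU
    obtain ⟨W, hW, hWV, hAW⟩ := ihAB hBV hV
    exact ⟨W, hW, hWV.trans hVU, hAW⟩

end ECC

/-- if `A ⪯ U` for a universe `U`, then there is a universe `U' ⪯ U`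
with `A ≃ U'`. -/
theorem cum_below_universe (A U : ECC.Term) (hU : ECC.IsUniv U) (h : ECC.Cum A U) :
    ∃ U', ECC.IsUniv U' ∧ ECC.Cum U' U ∧ ECC.Conv A U' :=
  h.exists_isUniv_of_conv_isUniv (.refl U) hU
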